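/- arXiv:2101.02918 — 3 statements merged into one kernel-verified Lean document; each statement's English description precedes it below -/
import Mathlib

section
/- Let K be a field with an additive ultrametric valuation v, and let r₁, r₂, r₃ ∈ K be pairwise distinct with a₁, a₂, a₃ the elementary symmetric functions and c₂, c₃ defined as below. Suppose the three values v(r₁ − r₂), v(r₁ − r₃), v(r₂ − r₃) are not all equal (tree type II). Then all three values are finite reals, at least two of them are equal to the minimum, v(c₂) and v(c₃) are finite, and 4·(max − min) = 2·v(c₃) − 3·v(c₂), where max and min denote the largest and smallest of the three pairwise valuations. (This is the edge-length formula 2ℓ(e₁) = (2b₃ − 3b₂)/2 for cubics of tree type II.) -/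
/-- Let `K` carry an additive ultrametric valuation `v` and let
`r₁, r₂, r₃ ∈ K` be pairwise distinct, with elementary symmetric functions `a₁, a₂, a₃` and
invariants `c₂, c₃` as below.  If the three values `v (r₁ - r₂), v (r₁ - r₃), v (r₂ - r₃)`
are not all equal (tree type II), then all three are finite reals, at least two of them
equal the minimum, `v c₂` and `v c₃` are finite, and
`4 (max - min) = 2 v(c₃) - 3 v(c₂)`: the edge-length formula `2 ℓ(e₁) = (2 b₃ - 3 b₂)/2`
for cubics of tree type II. -/
theorem cubic_type_II_edge_length
    {K : Type*} [Field K] (v : K → WithTop ℝ)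
    (hv0 : ∀ x : K, v x = ⊤ ↔ x = 0)
    (hvmul : ∀ x y : K, v (x * y) = v x + v y)
    (hvadd : ∀ x y : K, min (v x) (v y) ≤ v (x + y))
    (r₁ r₂ r₃ : K)
    (h12 : r₁ ≠ r₂) (h13 : r₁ ≠ r₃) (h23 : r₂ ≠ r₃)
    (a₁ a₂ a₃ c₂ c₃ : K)
    (ha₁ : a₁ = r₁ + r₂ + r₃)
    (ha₂ : a₂ = r₁ * r₂ + r₁ * r₃ + r₂ * r₃)
    (ha₃ : a₃ = r₁ * r₂ * r₃)
    (hc₂ : c₂ = a₁ ^ 4 - 6 * a₂ * a₁ ^ 2 + 9 * a₂ ^ 2)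
    (hc₃ : c₃ = -a₂ ^ 2 * a₁ ^ 2 + 4 * a₂ ^ 3 + 4 * a₃ * a₁ ^ 3
      - 18 * a₁ * a₂ * a₃ + 27 * a₃ ^ 2)
    (htypeII : ¬ (v (r₁ - r₂) = v (r₁ - r₃) ∧ v (r₂ - r₃) = v (r₁ - r₃))) :
    ∃ w₁ w₂ w₃ b₂ b₃ : ℝ,
      v (r₁ - r₂) = (w₁ : WithTop ℝ) ∧
      v (r₁ - r₃) = (w₂ : WithTop ℝ) ∧
      v (r₂ - r₃) = (w₃ : WithTop ℝ) ∧
      v c₂ = (b₂ : WithTop ℝ) ∧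
      v c₃ = (b₃ : WithTop ℝ) ∧
      ((w₁ = min w₁ (min w₂ w₃) ∧ w₂ = min w₁ (min w₂ w₃)) ∨
       (w₁ = min w₁ (min w₂ w₃) ∧ w₃ = min w₁ (min w₂ w₃)) ∨
       (w₂ = min w₁ (min w₂ w₃) ∧ w₃ = min w₁ (min w₂ w₃))) ∧
      4 * (max w₁ (max w₂ w₃) - min w₁ (min w₂ w₃)) = 2 * b₃ - 3 * b₂ := by

  have hvne : ∀ x : K, x ≠ 0 → v x ≠ ⊤ := fun x hx h => hx ((hv0 x).1 h)
  have hv1 : v 1 = 0 := by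
    have h := hvmul 1 1
    rw [mul_one] at h
    obtain ⟨a, ha⟩ := WithTop.ne_top_iff_exists.1 (hvne 1 one_ne_zero)
    rw [← ha] at h ⊢
    have h' : a = a + a := by exact_mod_cast h
    have : a = 0 := by linarith
    rw [this]; norm_num
  have hvneg : ∀ x : K, v (-x) = v x := by
    intro x
    have hm : v (-1 : K) = 0 := by
      have h := hvmul (-1 : K) (-1)
      rw [neg_mul_neg, one_mul, hv1] at h
      obtain ⟨a, ha⟩ := WithTop.ne_top_iff_exists.1 (hvne (-1) (by norm_num))
      rw [← ha] at h ⊢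
      have h' : (0 : ℝ) = a + a := by exact_mod_cast h
      have : a = 0 := by linarith
      rw [this]; norm_num
    rw [show -x = (-1 : K) * x by ring, hvmul, hm, zero_add]
  have hlt : ∀ x y : K, v x < v y → v (x + y) = v x := by
    intro x y h
    have h1 : min (v x) (v y) ≤ v (x + y) := hvadd x y
    rw [min_eq_left h.le] at h1
    have h2 := hvadd (x + y) (-y)
    rw [add_neg_cancel_right, hvneg] at h2
    refine le_antisymm ?_ h1
    by_contra hcon
    push_neg at hcon
    exact absurd h2 (not_le.2 (lt_min hcon h))
  obtain ⟨w₁, hw₁⟩ := WithTop.ne_top_iff_exists.1 (hvne _ (sub_ne_zero.2 h12))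
  obtain ⟨w₂, hw₂⟩ := WithTop.ne_top_iff_exists.1 (hvne _ (sub_ne_zero.2 h13))
  obtain ⟨w₃, hw₃⟩ := WithTop.ne_top_iff_exists.1 (hvne _ (sub_ne_zero.2 h23))
  have hqid : a₁ ^ 2 - 3 * a₂ = (r₁ - r₂) ^ 2 + (r₂ - r₃) * (r₁ - r₃) := by
    subst ha₁ ha₂; ring
  have hc2id : c₂ = (a₁ ^ 2 - 3 * a₂) * (a₁ ^ 2 - 3 * a₂) := by
    subst hc₂; ring
  have hc3id : c₃ = -(((r₁ - r₂) * (r₁ - r₃) * (r₂ - r₃)) *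
      ((r₁ - r₂) * (r₁ - r₃) * (r₂ - r₃))) := by
    subst hc₃ ha₁ ha₂ ha₃; ring
  have hA : v ((r₁ - r₂) * (r₁ - r₃) * (r₂ - r₃)) = ((w₁ + w₂ + w₃ : ℝ) : WithTop ℝ) := by
    rw [hvmul, hvmul, ← hw₁, ← hw₂, ← hw₃, ← WithTop.coe_add, ← WithTop.coe_add]
  have hvc₃ : v c₃ = ((2 * (w₁ + w₂ + w₃) : ℝ) : WithTop ℝ) := by
    rw [hc3id, hvneg, hvmul, hA, ← WithTop.coe_add, WithTop.coe_eq_coe]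
    ring
  have hv12 : v ((r₁ - r₂) ^ 2) = ((w₁ + w₁ : ℝ) : WithTop ℝ) := by
    rw [sq, hvmul, ← hw₁, ← WithTop.coe_add]
  have hv23 : v ((r₂ - r₃) * (r₁ - r₃)) = ((w₃ + w₂ : ℝ) : WithTop ℝ) := by
    rw [hvmul, ← hw₂, ← hw₃, ← WithTop.coe_add]
  have hty : ¬ (w₁ = w₂ ∧ w₃ = w₂) := by
    rintro ⟨h1, h2⟩
    exact htypeII ⟨by rw [← hw₁, ← hw₂, h1], by rw [← hw₃, ← hw₂, h2]⟩
  rcases lt_trichotomy w₁ w₃ with hc | hc | hc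
  · -- w₁ < w₃, hence w₂ = w₁
    have h21 : w₂ = w₁ := by
      have h := hlt (r₁ - r₂) (r₂ - r₃) (by rw [← hw₁, ← hw₃]; exact_mod_cast hc)
      rw [show (r₁ - r₂) + (r₂ - r₃) = r₁ - r₃ from by ring, ← hw₂, ← hw₁] at h
      exact_mod_cast h
    have hq : v (a₁ ^ 2 - 3 * a₂) = ((w₁ + w₁ : ℝ) : WithTop ℝ) := by
      rw [hqid, hlt _ _ (by
        rw [hv12, hv23]
        exact_mod_cast (show w₁ + w₁ < w₃ + w₂ by linarith)), hv12]
    have hvc₂ : v c₂ = ((2 * (w₁ + w₁) : ℝ) : WithTop ℝ) := by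
      rw [hc2id, hvmul, hq, ← WithTop.coe_add, WithTop.coe_eq_coe]; ring
    refine ⟨w₁, w₂, w₃, 2 * (w₁ + w₁), 2 * (w₁ + w₂ + w₃),
      hw₁.symm, hw₂.symm, hw₃.symm, hvc₂, hvc₃, ?_, ?_⟩
    · left
      rw [min_eq_left (show w₂ ≤ w₃ by linarith), min_eq_left (show w₁ ≤ w₂ by linarith)]
      exact ⟨rfl, h21⟩
    · rw [max_eq_right (show w₂ ≤ w₃ by linarith), max_eq_right (show w₁ ≤ w₃ by linarith),
        min_eq_left (show w₂ ≤ w₃ by linarith), min_eq_left (show w₁ ≤ w₂ by linarith)]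
      linarith
  · -- w₁ = w₃, hence w₁ < w₂
    have h2gt : w₁ < w₂ := by
      have hge : (w₁ : WithTop ℝ) ≤ (w₂ : WithTop ℝ) := by
        have h := hvadd (r₁ - r₂) (r₂ - r₃)
        rw [show (r₁ - r₂) + (r₂ - r₃) = r₁ - r₃ from by ring, ← hw₁, ← hw₂, ← hw₃] at h
        rwa [show ((w₃ : ℝ) : WithTop ℝ) = (w₁ : WithTop ℝ) from by rw [hc],
          min_self] at h
      have hge' : w₁ ≤ w₂ := by exact_mod_cast hge
      rcases hge'.lt_or_eq with h | h
      · exact h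
      · exact (hty ⟨h, by rw [← hc]; exact h⟩).elim
    have hq : v (a₁ ^ 2 - 3 * a₂) = ((w₁ + w₁ : ℝ) : WithTop ℝ) := by
      rw [hqid, hlt _ _ (by
        rw [hv12, hv23]
        exact_mod_cast (show w₁ + w₁ < w₃ + w₂ by linarith)), hv12]
    have hvc₂ : v c₂ = ((2 * (w₁ + w₁) : ℝ) : WithTop ℝ) := by
      rw [hc2id, hvmul, hq, ← WithTop.coe_add, WithTop.coe_eq_coe]; ring
    refine ⟨w₁, w₂, w₃, 2 * (w₁ + w₁), 2 * (w₁ + w₂ + w₃),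
      hw₁.symm, hw₂.symm, hw₃.symm, hvc₂, hvc₃, ?_, ?_⟩
    · right; left
      rw [min_eq_right (show w₃ ≤ w₂ by linarith), min_eq_left (show w₁ ≤ w₃ by linarith)]
      exact ⟨rfl, hc.symm⟩
    · rw [max_eq_left (show w₃ ≤ w₂ by linarith), max_eq_right (show w₁ ≤ w₂ by linarith),
        min_eq_right (show w₃ ≤ w₂ by linarith), min_eq_left (show w₁ ≤ w₃ by linarith)]
      linarith
  · -- w₃ < w₁, hence w₂ = w₃
    have h23' : w₂ = w₃ := by
      have h := hlt (r₂ - r₃) (r₁ - r₂) (by rw [← hw₁, ← hw₃]; exact_mod_cast hc)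
      rw [show (r₂ - r₃) + (r₁ - r₂) = r₁ - r₃ from by ring, ← hw₂, ← hw₃] at h
      exact_mod_cast h
    have hq : v (a₁ ^ 2 - 3 * a₂) = ((w₃ + w₂ : ℝ) : WithTop ℝ) := by
      rw [hqid, add_comm, hlt _ _ (by
        rw [hv12, hv23]
        exact_mod_cast (show w₃ + w₂ < w₁ + w₁ by linarith)), hv23]
    have hvc₂ : v c₂ = ((2 * (w₃ + w₂) : ℝ) : WithTop ℝ) := by
      rw [hc2id, hvmul, hq, ← WithTop.coe_add, WithTop.coe_eq_coe]; ring
    refine ⟨w₁, w₂, w₃, 2 * (w₃ + w₂), 2 * (w₁ + w₂ + w₃),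
      hw₁.symm, hw₂.symm, hw₃.symm, hvc₂, hvc₃, ?_, ?_⟩
    · right; right
      rw [min_eq_left (show w₂ ≤ w₃ by linarith), min_eq_right (show w₂ ≤ w₁ by linarith)]
      exact ⟨rfl, h23'.symm⟩
    · rw [max_eq_right (show w₂ ≤ w₃ by linarith), max_eq_left (show w₃ ≤ w₁ by linarith),
        min_eq_left (show w₂ ≤ w₃ by linarith), min_eq_right (show w₂ ≤ w₁ by linarith)]
      linarith
end

section
/- Let K be a field with (2 : K) ≠ 0, let a₁, a₂, a₃ ∈ K, and let W be the Weierstrass curve y² = x³ − a₁x² + a₂x − a₃, i.e., the Weierstrass curve with coefficient tuple (0, −a₁, 0, a₂, −a₃). Define c₂ := a₁⁴ − 6·a₂·a₁² + 9·a₂² and c₃ := −a₂²·a₁² + 4·a₂³ + 4·a₃·a₁³ − 18·a₁·a₂·a₃ + 27·a₃², and assume c₃ ≠ 0. Then W.Δ ≠ 0 and the j-invariant j := W.c₄³ / W.Δ satisfies j² = 2¹⁶ · c₂³ / c₃². (In the paper's notation: 2¹⁶ · j_trop = j(E)², where j_trop = c₂³/c₃².) -/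
/-- Let `K` be a field with `2 ≠ 0`, and let `W` be the Weierstrass curve
`y² = x³ - a₁ x² + a₂ x - a₃`, i.e. with coefficient tuple `(0, -a₁, 0, a₂, -a₃)`.  With
`c₂ = a₁⁴ - 6 a₂ a₁² + 9 a₂²` and
`c₃ = -a₂² a₁² + 4 a₂³ + 4 a₃ a₁³ - 18 a₁ a₂ a₃ + 27 a₃² ≠ 0`,
one has `W.Δ ≠ 0` and the j-invariant `j = W.c₄³ / W.Δ` satisfies
`j² = 2¹⁶ c₂³ / c₃²` (i.e. `2¹⁶ j_trop = j(E)²`). -/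
theorem j_invariant_squared_eq_two_pow_sixteen_j_trop
    {K : Type*} [Field K] (h2 : (2 : K) ≠ 0)
    (a₁ a₂ a₃ c₂ c₃ : K)
    (hc₂ : c₂ = a₁ ^ 4 - 6 * a₂ * a₁ ^ 2 + 9 * a₂ ^ 2)
    (hc₃ : c₃ = -a₂ ^ 2 * a₁ ^ 2 + 4 * a₂ ^ 3 + 4 * a₃ * a₁ ^ 3
      - 18 * a₁ * a₂ * a₃ + 27 * a₃ ^ 2)
    (hc₃0 : c₃ ≠ 0)
    (W : WeierstrassCurve K)
    (hW : W = { a₁ := 0, a₂ := -a₁, a₃ := 0, a₄ := a₂, a₆ := -a₃ }) :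
    W.Δ ≠ 0 ∧ (W.c₄ ^ 3 / W.Δ) ^ 2 = 2 ^ 16 * c₂ ^ 3 / c₃ ^ 2 := by
  subst hW hc₂ hc₃
  have h16 : (16 : K) ≠ 0 := by
    have : (16 : K) = 2 ^ 4 := by norm_num
    rw [this]; exact pow_ne_zero _ h2
  have hΔ : ({ a₁ := 0, a₂ := -a₁, a₃ := 0, a₄ := a₂, a₆ := -a₃ } :
      WeierstrassCurve K).Δ = -16 * (-a₂ ^ 2 * a₁ ^ 2 + 4 * a₂ ^ 3 + 4 * a₃ * a₁ ^ 3
      - 18 * a₁ * a₂ * a₃ + 27 * a₃ ^ 2) := by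
    simp only [WeierstrassCurve.Δ, WeierstrassCurve.b₂, WeierstrassCurve.b₄,
      WeierstrassCurve.b₆, WeierstrassCurve.b₈]
    ring
  have hc4 : ({ a₁ := 0, a₂ := -a₁, a₃ := 0, a₄ := a₂, a₆ := -a₃ } :
      WeierstrassCurve K).c₄ = 16 * (a₁ ^ 2 - 3 * a₂) := by
    simp only [WeierstrassCurve.c₄, WeierstrassCurve.b₂, WeierstrassCurve.b₄]
    ring
  have hΔ0 : ({ a₁ := 0, a₂ := -a₁, a₃ := 0, a₄ := a₂, a₆ := -a₃ } :
      WeierstrassCurve K).Δ ≠ 0 := by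
    rw [hΔ]
    exact mul_ne_zero (by simpa using h16) hc₃0
  refine ⟨hΔ0, ?_⟩
  have hΔ0' := hΔ0
  rw [hΔ] at hΔ0' 
  rw [hΔ, hc4, div_pow, div_eq_div_iff (pow_ne_zero _ hΔ0') (pow_ne_zero _ hc₃0)]
  ring
end

section
/- Let K be a field with an additive ultrametric valuation v and let π ∈ K satisfy 0 < v(π) < ∞ and v(2) = 0. Define α := (1 + π, 1 + 2π, π, π², 2π²) and β := (π, 2π, 3π, 1 + π², 1 + 2π²) as families Fin 5 → K. Then both families are injective, the multisets of pairwise valuations {v(α i − α j) : i < j} and {v(β i − β j) : i < j} coincide (each consists of six values 0, three values v(π), and one value 2·v(π)), yet there is NO permutation σ of Fin 5 with v(α i − α j) = v(β (σ i) − β (σ j)) for all i, j. Hence the order-two tropical invariants (equivalently, the multiset of pairwise root valuations) do not determine the marked tree of a degree-5 polynomial. -/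
open Finset

/-- Over a field `K` with an additive ultrametric valuation `v`, let
`π ∈ K` satisfy `0 < v π < ∞` and `v 2 = 0`, and set
`α = (1+π, 1+2π, π, π², 2π²)` and `β = (π, 2π, 3π, 1+π², 1+2π²)`.
Then both families are injective, the multisets of pairwise valuations
`{v (α i - α j) : i < j}` and `{v (β i - β j) : i < j}` coincide (each consisting of six
values `0`, three values `v π` and one value `2 v π`), yet there is NO permutation `σ` of
`Fin 5` with `v (α i - α j) = v (β (σ i) - β (σ j))` for all `i, j`.  Hence the order-two
tropical invariants do not determine the marked tree of a degree-5 polynomial. -/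
theorem order_two_invariants_do_not_determine_tree
    {K : Type*} [Field K] (v : K → WithTop ℝ)
    (hv0 : ∀ x : K, v x = ⊤ ↔ x = 0)
    (hvmul : ∀ x y : K, v (x * y) = v x + v y)
    (hvadd : ∀ x y : K, min (v x) (v y) ≤ v (x + y))
    (π : K)
    (hπpos : (0 : WithTop ℝ) < v π) (hπtop : v π ≠ ⊤)
    (h2 : v 2 = 0)
    (α β : Fin 5 → K)
    (hαdef : α = ![1 + π, 1 + 2 * π, π, π ^ 2, 2 * π ^ 2])
    (hβdef : β = ![π, 2 * π, 3 * π, 1 + π ^ 2, 1 + 2 * π ^ 2]) :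
    Function.Injective α ∧ Function.Injective β ∧
    ((univ.filter (fun p : Fin 5 × Fin 5 => p.1 < p.2)).val.map
        (fun p => v (α p.1 - α p.2))
      = (univ.filter (fun p : Fin 5 × Fin 5 => p.1 < p.2)).val.map
          (fun p => v (β p.1 - β p.2))) ∧
    ((univ.filter (fun p : Fin 5 × Fin 5 => p.1 < p.2)).val.map
        (fun p => v (α p.1 - α p.2))
      = Multiset.replicate 6 (0 : WithTop ℝ) + Multiset.replicate 3 (v π)
          + Multiset.replicate 1 (v π + v π)) ∧
    ¬ ∃ σ : Equiv.Perm (Fin 5), ∀ i j : Fin 5,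
        v (α i - α j) = v (β (σ i) - β (σ j)) := by
  -- components
  have hα0 : α 0 = 1 + π := by rw [hαdef]; rfl
  have hα1 : α 1 = 1 + 2 * π := by rw [hαdef]; rfl
  have hα2 : α 2 = π := by rw [hαdef]; rfl
  have hα3 : α 3 = π ^ 2 := by rw [hαdef]; rfl
  have hα4 : α 4 = 2 * π ^ 2 := by rw [hαdef]; rfl
  have hβ0 : β 0 = π := by rw [hβdef]; rfl
  have hβ1 : β 1 = 2 * π := by rw [hβdef]; rfl
  have hβ2 : β 2 = 3 * π := by rw [hβdef]; rfl
  have hβ3 : β 3 = 1 + π ^ 2 := by rw [hβdef]; rfl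
  have hβ4 : β 4 = 1 + 2 * π ^ 2 := by rw [hβdef]; rfl
  -- basic valuation facts
  have v0top : v 0 = ⊤ := (hv0 0).mpr rfl
  have h1 : v 1 = (0 : WithTop ℝ) := by
    have h := hvmul 1 1
    rw [one_mul] at h
    have hne : v 1 ≠ ⊤ := by simp [hv0]
    exact (WithTop.add_left_cancel hne (by rw [add_zero]; exact h)).symm
  have hm1ne : v (-1 : K) ≠ ⊤ := by simp [hv0]
  have hneg1 : v (-1 : K) = 0 := by
    have h := hvmul (-1 : K) (-1)
    rw [neg_mul_neg, one_mul, h1] at h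
    lift v (-1 : K) to ℝ using hm1ne with r
    have hr : r + r = 0 := by exact_mod_cast h.symm
    have : r = 0 := by linarith
    exact_mod_cast congrArg (fun x : ℝ => (x : WithTop ℝ)) this
  have hvneg : ∀ x : K, v (-x) = v x := by
    intro x
    rw [show -x = (-1 : K) * x by ring, hvmul, hneg1, zero_add]
  have hsubc : ∀ x y : K, v (x - y) = v (y - x) := by
    intro x y
    rw [show x - y = -(y - x) by ring, hvneg]
  have vlt : ∀ a b : K, v a < v b → v (a + b) = v a := by
    intro a b hab
    refine le_antisymm ?_ ?_
    · have h := hvadd (a + b) (-b)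
      have e : (a + b) + (-b) = a := by ring
      rw [e, hvneg] at h
      rcases le_total (v (a + b)) (v b) with hc | hc
      · rwa [min_eq_left hc] at h
      · rw [min_eq_right hc] at h
        exact absurd (lt_of_lt_of_le hab h) (lt_irrefl _)
    · have h := hvadd a b
      rwa [min_eq_left hab.le] at h
  have vmin : ∀ a b : K, 0 ≤ v a → 0 ≤ v b → 0 ≤ v (a + b) :=
    fun a b ha hb => le_trans (le_min ha hb) (hvadd a b)
  have vsub_nn : ∀ a b : K, 0 ≤ v a → 0 ≤ v b → 0 ≤ v (a - b) := by
    intro a b ha hb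
    have e : a - b = a + (-b) := by ring
    rw [e]
    exact vmin a (-b) ha (by rw [hvneg]; exact hb)
  have v2π : v (2 * π) = v π := by rw [hvmul, h2, zero_add]
  have nneg2π : (0 : WithTop ℝ) ≤ v (2 * π) := by rw [v2π]; exact hπpos.le
  have v3nn : (0 : WithTop ℝ) ≤ v 3 := by
    have h := hvadd 1 2
    rw [h1, h2, min_self] at h
    have e : (1 : K) + 2 = 3 := by norm_num
    rwa [e] at h
  have keyt : ∀ u : K, v u = 0 → v (π * u) = v π := by
    intro u hu; rw [hvmul, hu, add_zero]
  have key0 : ∀ c : K, 0 ≤ v c → v (1 + π * c) = 0 := by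
    intro c hc
    have hpc : v 1 < v (π * c) := by
      rw [h1, hvmul]
      exact lt_of_lt_of_le hπpos (le_add_of_nonneg_right hc)
    rw [vlt 1 (π * c) hpc, h1]
  have key0n : ∀ c : K, 0 ≤ v c → v (-(1 + π * c)) = 0 := by
    intro c hc; rw [hvneg]; exact key0 c hc
  have vunit : ∀ a c : K, v a = 0 → 0 < v c → v (a + c) = 0 := by
    intro a c ha hc
    rw [vlt a c (by rw [ha]; exact hc), ha]
  have um2 : v (-2 : K) = 0 := by rw [hvneg]; exact h2
  have u1 : v (1 - π) = 0 := by
    have e : (1 : K) - π = 1 + (-π) := by ring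
    rw [e]
    exact vunit 1 (-π) h1 (by rw [hvneg]; exact hπpos)
  have u2 : v (1 - 2 * π) = 0 := by
    have e : (1 : K) - 2 * π = 1 + (-(2 * π)) := by ring
    rw [e]
    exact vunit 1 _ h1 (by rw [hvneg, v2π]; exact hπpos)
  -- non-equalities
  have h0ne : (0 : WithTop ℝ) ≠ ⊤ := by simp
  have httne : v π + v π ≠ ⊤ := by
    intro h
    rcases WithTop.add_eq_top.mp h with h | h <;> exact hπtop h
  have htne : v π ≠ v π + v π := by
    intro h
    have h' : (0 : WithTop ℝ) + v π = v π + v π := by rw [zero_add]; exact h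
    exact hπpos.ne (WithTop.add_right_cancel hπtop h')
  have hzne : (0 : WithTop ℝ) ≠ v π + v π := by
    intro h
    have hle : v π ≤ v π + v π := le_add_of_nonneg_left hπpos.le
    rw [← h] at hle
    exact absurd (lt_of_lt_of_le hπpos hle) (lt_irrefl _)
  -- tables
  have A01 : v (α 0 - α 1) = v π := by
    have e : α 0 - α 1 = π * (-1) := by rw [hα0, hα1]; ring
    rw [e]; exact keyt _ hneg1
  have A02 : v (α 0 - α 2) = (0 : WithTop ℝ) := by
    have e : α 0 - α 2 = 1 + π * 0 := by rw [hα0, hα2]; ring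
    rw [e]; exact key0 _ (by rw [v0top]; exact le_top)
  have A03 : v (α 0 - α 3) = (0 : WithTop ℝ) := by
    have e : α 0 - α 3 = 1 + π * (1 - π) := by rw [hα0, hα3]; ring
    rw [e]; exact key0 _ u1.ge
  have A04 : v (α 0 - α 4) = (0 : WithTop ℝ) := by
    have e : α 0 - α 4 = 1 + π * (1 - 2 * π) := by rw [hα0, hα4]; ring
    rw [e]; exact key0 _ u2.ge
  have A12 : v (α 1 - α 2) = (0 : WithTop ℝ) := by
    have e : α 1 - α 2 = 1 + π * 1 := by rw [hα1, hα2]; ring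
    rw [e]; exact key0 _ h1.ge
  have A13 : v (α 1 - α 3) = (0 : WithTop ℝ) := by
    have e : α 1 - α 3 = 1 + π * (2 - π) := by rw [hα1, hα3]; ring
    rw [e]; exact key0 _ (vsub_nn 2 π h2.ge hπpos.le)
  have A14 : v (α 1 - α 4) = (0 : WithTop ℝ) := by
    have e : α 1 - α 4 = 1 + π * (2 - 2 * π) := by rw [hα1, hα4]; ring
    rw [e]; exact key0 _ (vsub_nn 2 (2 * π) h2.ge nneg2π)
  have A23 : v (α 2 - α 3) = v π := by
    have e : α 2 - α 3 = π * (1 - π) := by rw [hα2, hα3]; ring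
    rw [e]; exact keyt _ u1
  have A24 : v (α 2 - α 4) = v π := by
    have e : α 2 - α 4 = π * (1 - 2 * π) := by rw [hα2, hα4]; ring
    rw [e]; exact keyt _ u2
  have A34 : v (α 3 - α 4) = v π + v π := by
    have e : α 3 - α 4 = π * (-π) := by rw [hα3, hα4]; ring
    rw [e, hvmul, hvneg]
  have A10 : v (α 1 - α 0) = v π := (hsubc _ _).trans A01
  have A20 : v (α 2 - α 0) = (0 : WithTop ℝ) := (hsubc _ _).trans A02
  have A30 : v (α 3 - α 0) = (0 : WithTop ℝ) := (hsubc _ _).trans A03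
  have A40 : v (α 4 - α 0) = (0 : WithTop ℝ) := (hsubc _ _).trans A04
  have A21 : v (α 2 - α 1) = (0 : WithTop ℝ) := (hsubc _ _).trans A12
  have A31 : v (α 3 - α 1) = (0 : WithTop ℝ) := (hsubc _ _).trans A13
  have A41 : v (α 4 - α 1) = (0 : WithTop ℝ) := (hsubc _ _).trans A14
  have A32 : v (α 3 - α 2) = v π := (hsubc _ _).trans A23
  have A42 : v (α 4 - α 2) = v π := (hsubc _ _).trans A24
  have A43 : v (α 4 - α 3) = v π + v π := (hsubc _ _).trans A34
  have B01 : v (β 0 - β 1) = v π := by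
    have e : β 0 - β 1 = π * (-1) := by rw [hβ0, hβ1]; ring
    rw [e]; exact keyt _ hneg1
  have B02 : v (β 0 - β 2) = v π := by
    have e : β 0 - β 2 = π * (-2) := by rw [hβ0, hβ2]; ring
    rw [e]; exact keyt _ um2
  have B03 : v (β 0 - β 3) = (0 : WithTop ℝ) := by
    have e : β 0 - β 3 = -(1 + π * (π - 1)) := by rw [hβ0, hβ3]; ring
    rw [e]; exact key0n _ (vsub_nn π 1 hπpos.le h1.ge)
  have B04 : v (β 0 - β 4) = (0 : WithTop ℝ) := by
    have e : β 0 - β 4 = -(1 + π * (2 * π - 1)) := by rw [hβ0, hβ4]; ring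
    rw [e]; exact key0n _ (vsub_nn (2 * π) 1 nneg2π h1.ge)
  have B12 : v (β 1 - β 2) = v π := by
    have e : β 1 - β 2 = π * (-1) := by rw [hβ1, hβ2]; ring
    rw [e]; exact keyt _ hneg1
  have B13 : v (β 1 - β 3) = (0 : WithTop ℝ) := by
    have e : β 1 - β 3 = -(1 + π * (π - 2)) := by rw [hβ1, hβ3]; ring
    rw [e]; exact key0n _ (vsub_nn π 2 hπpos.le h2.ge)
  have B14 : v (β 1 - β 4) = (0 : WithTop ℝ) := by
    have e : β 1 - β 4 = -(1 + π * (2 * π - 2)) := by rw [hβ1, hβ4]; ring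
    rw [e]; exact key0n _ (vsub_nn (2 * π) 2 nneg2π h2.ge)
  have B23 : v (β 2 - β 3) = (0 : WithTop ℝ) := by
    have e : β 2 - β 3 = -(1 + π * (π - 3)) := by rw [hβ2, hβ3]; ring
    rw [e]; exact key0n _ (vsub_nn π 3 hπpos.le v3nn)
  have B24 : v (β 2 - β 4) = (0 : WithTop ℝ) := by
    have e : β 2 - β 4 = -(1 + π * (2 * π - 3)) := by rw [hβ2, hβ4]; ring
    rw [e]; exact key0n _ (vsub_nn (2 * π) 3 nneg2π v3nn)
  have B34 : v (β 3 - β 4) = v π + v π := by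
    have e : β 3 - β 4 = π * (-π) := by rw [hβ3, hβ4]; ring
    rw [e, hvmul, hvneg]
  have B10 : v (β 1 - β 0) = v π := (hsubc _ _).trans B01
  have B20 : v (β 2 - β 0) = v π := (hsubc _ _).trans B02
  have B30 : v (β 3 - β 0) = (0 : WithTop ℝ) := (hsubc _ _).trans B03
  have B40 : v (β 4 - β 0) = (0 : WithTop ℝ) := (hsubc _ _).trans B04
  have B21 : v (β 2 - β 1) = v π := (hsubc _ _).trans B12
  have B31 : v (β 3 - β 1) = (0 : WithTop ℝ) := (hsubc _ _).trans B13
  have B41 : v (β 4 - β 1) = (0 : WithTop ℝ) := (hsubc _ _).trans B14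
  have B32 : v (β 3 - β 2) = (0 : WithTop ℝ) := (hsubc _ _).trans B23
  have B42 : v (β 4 - β 2) = (0 : WithTop ℝ) := (hsubc _ _).trans B24
  have B43 : v (β 4 - β 3) = v π + v π := (hsubc _ _).trans B34
  -- injectivity
  have hAne : ∀ i j : Fin 5, i ≠ j → v (α i - α j) ≠ ⊤ := by
    intro i j hij
    fin_cases i <;> fin_cases j <;>
      first
      | exact absurd rfl hij
      | exact fun h => hπtop (A01.symm.trans h)
      | exact fun h => hπtop (A10.symm.trans h)
      | exact fun h => hπtop (A23.symm.trans h)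
      | exact fun h => hπtop (A32.symm.trans h)
      | exact fun h => hπtop (A24.symm.trans h)
      | exact fun h => hπtop (A42.symm.trans h)
      | exact fun h => httne (A34.symm.trans h)
      | exact fun h => httne (A43.symm.trans h)
      | exact fun h => h0ne (A02.symm.trans h)
      | exact fun h => h0ne (A20.symm.trans h)
      | exact fun h => h0ne (A03.symm.trans h)
      | exact fun h => h0ne (A30.symm.trans h)
      | exact fun h => h0ne (A04.symm.trans h)
      | exact fun h => h0ne (A40.symm.trans h)
      | exact fun h => h0ne (A12.symm.trans h)
      | exact fun h => h0ne (A21.symm.trans h)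
      | exact fun h => h0ne (A13.symm.trans h)
      | exact fun h => h0ne (A31.symm.trans h)
      | exact fun h => h0ne (A14.symm.trans h)
      | exact fun h => h0ne (A41.symm.trans h)
  have hBne : ∀ i j : Fin 5, i ≠ j → v (β i - β j) ≠ ⊤ := by
    intro i j hij
    fin_cases i <;> fin_cases j <;>
      first
      | exact absurd rfl hij
      | exact fun h => hπtop (B01.symm.trans h)
      | exact fun h => hπtop (B10.symm.trans h)
      | exact fun h => hπtop (B02.symm.trans h)
      | exact fun h => hπtop (B20.symm.trans h)
      | exact fun h => hπtop (B12.symm.trans h)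
      | exact fun h => hπtop (B21.symm.trans h)
      | exact fun h => httne (B34.symm.trans h)
      | exact fun h => httne (B43.symm.trans h)
      | exact fun h => h0ne (B03.symm.trans h)
      | exact fun h => h0ne (B30.symm.trans h)
      | exact fun h => h0ne (B04.symm.trans h)
      | exact fun h => h0ne (B40.symm.trans h)
      | exact fun h => h0ne (B13.symm.trans h)
      | exact fun h => h0ne (B31.symm.trans h)
      | exact fun h => h0ne (B14.symm.trans h)
      | exact fun h => h0ne (B41.symm.trans h)
      | exact fun h => h0ne (B23.symm.trans h)
      | exact fun h => h0ne (B32.symm.trans h)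
      | exact fun h => h0ne (B24.symm.trans h)
      | exact fun h => h0ne (B42.symm.trans h)
  have hαinj : Function.Injective α := by
    intro i j hij
    by_contra hne
    exact hAne i j hne (by rw [hij, sub_self]; exact v0top)
  have hβinj : Function.Injective β := by
    intro i j hij
    by_contra hne
    exact hBne i j hne (by rw [hij, sub_self]; exact v0top)
  have hval : (univ.filter (fun p : Fin 5 × Fin 5 => p.1 < p.2)).val
      = (↑[((0 : Fin 5), (1 : Fin 5)), (0, 2), (0, 3), (0, 4), (1, 2), (1, 3),
            (1, 4), (2, 3), (2, 4), (3, 4)] : Multiset (Fin 5 × Fin 5)) := by decide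
  refine ⟨hαinj, hβinj, ?_, ?_, ?_⟩
  · rw [hval, Multiset.map_coe, Multiset.map_coe]
    show (↑[v (α 0 - α 1), v (α 0 - α 2), v (α 0 - α 3), v (α 0 - α 4),
            v (α 1 - α 2), v (α 1 - α 3), v (α 1 - α 4), v (α 2 - α 3),
            v (α 2 - α 4), v (α 3 - α 4)] : Multiset (WithTop ℝ))
      = ↑[v (β 0 - β 1), v (β 0 - β 2), v (β 0 - β 3), v (β 0 - β 4),
            v (β 1 - β 2), v (β 1 - β 3), v (β 1 - β 4), v (β 2 - β 3),
            v (β 2 - β 4), v (β 3 - β 4)]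
    rw [A01, A02, A03, A04, A12, A13, A14, A23, A24, A34,
        B01, B02, B03, B04, B12, B13, B14, B23, B24, B34]
    simp only [← Multiset.cons_coe, Multiset.coe_nil, ← Multiset.singleton_add]
    abel
  · rw [hval, Multiset.map_coe]
    show (↑[v (α 0 - α 1), v (α 0 - α 2), v (α 0 - α 3), v (α 0 - α 4),
            v (α 1 - α 2), v (α 1 - α 3), v (α 1 - α 4), v (α 2 - α 3),
            v (α 2 - α 4), v (α 3 - α 4)] : Multiset (WithTop ℝ)) = _
    rw [A01, A02, A03, A04, A12, A13, A14, A23, A24, A34]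
    simp only [Multiset.replicate_succ, Multiset.replicate_zero,
      ← Multiset.cons_coe, Multiset.coe_nil, ← Multiset.singleton_add, add_zero]
    abel
  · rintro ⟨σ, hσ⟩
    have key34 : ∀ i j : Fin 5, v (β i - β j) = v π + v π →
        (i = 3 ∧ j = 4) ∨ (i = 4 ∧ j = 3) := by
      intro i j h
      fin_cases i <;> fin_cases j <;>
        first
        | exact Or.inl ⟨rfl, rfl⟩
        | exact Or.inr ⟨rfl, rfl⟩
        | (simp only [sub_self] at h; rw [v0top] at h; exact absurd h.symm httne)
        | exact absurd (B01.symm.trans h) htne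
        | exact absurd (B10.symm.trans h) htne
        | exact absurd (B02.symm.trans h) htne
        | exact absurd (B20.symm.trans h) htne
        | exact absurd (B12.symm.trans h) htne
        | exact absurd (B21.symm.trans h) htne
        | exact absurd (B03.symm.trans h) hzne
        | exact absurd (B30.symm.trans h) hzne
        | exact absurd (B04.symm.trans h) hzne
        | exact absurd (B40.symm.trans h) hzne
        | exact absurd (B13.symm.trans h) hzne
        | exact absurd (B31.symm.trans h) hzne
        | exact absurd (B14.symm.trans h) hzne
        | exact absurd (B41.symm.trans h) hzne
        | exact absurd (B23.symm.trans h) hzne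
        | exact absurd (B32.symm.trans h) hzne
        | exact absurd (B24.symm.trans h) hzne
        | exact absurd (B42.symm.trans h) hzne
    have h34 := hσ 3 4
    rw [A34] at h34
    have h23 := hσ 2 3
    rw [A23] at h23
    have hs := key34 _ _ h34.symm
    have hne3 : σ 2 ≠ σ 3 := fun h => absurd (σ.injective h) (by decide)
    have hne4 : σ 2 ≠ σ 4 := fun h => absurd (σ.injective h) (by decide)
    obtain ⟨k, hk⟩ : ∃ k, σ 2 = k := ⟨_, rfl⟩
    rw [hk] at h23 hne3 hne4
    rcases hs with ⟨e3, e4⟩ | ⟨e3, e4⟩ <;>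
        rw [e3] at h23 hne3 <;> rw [e4] at hne4 <;>
        fin_cases k <;>
      first
      | exact absurd rfl hne3
      | exact absurd rfl hne4
      | exact hπpos.ne' (h23.trans B03)
      | exact hπpos.ne' (h23.trans B13)
      | exact hπpos.ne' (h23.trans B23)
      | exact hπpos.ne' (h23.trans B04)
      | exact hπpos.ne' (h23.trans B14)
      | exact hπpos.ne' (h23.trans B24)
end
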